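/- arXiv:2409.07750 — 2 statements merged into one kernel-verified Lean document; each statement's English description precedes it below -/
import Mathlib

section
/- Let X be a Banach space, T : X → X a Fredholm operator, and R : X → X a bounded operator such that (Id − TR)^n and (Id − RT)^n belong to S¹_app(X) for some integer n ≥ 1. Then Index T = tr((Id − RT)^n) − tr((Id − TR)^n). -/
/-!
A Fredholm operator `T` on a Banach space has a bounded inner inverse `S`, `T S T = T` (open
mapping theorem applied to `(c, y) ↦ T c + y` on a complement of `ker T` times a complement of
`ran T`). Then `1 - S T` and `1 - T S` are finite-rank idempotents with range `ker T` and a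
complement of `ran T`, so their traces are the two dimensions in the index. The geometric sum
`S_n = (Σ_{j<n} (1 - R T)^j) R` satisfies `1 - S_n T = (1 - R T)^n` and `1 - T S_n = (1 - T R)^n`.
Finally, for two parametrices `s₁, s₂` of `T` modulo a trace ideal, `s₁ - s₂` lies in the ideal,
and `tr ((s₁ - s₂) T) = tr (T (s₁ - s₂))` says that `tr (1 - s T) - tr (1 - T s)` does not depend
on the parametrix `s`.
-/

noncomputable section

/-- A bounded operator on a Banach space is Fredholm if its kernel and cokernel
are finite-dimensional. -/
def IsFredholm {X : Type*} [NormedAddCommGroup X] [NormedSpace ℂ X] (T : X →L[ℂ] X) : Prop :=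
  FiniteDimensional ℂ (LinearMap.ker (T : X →ₗ[ℂ] X)) ∧ FiniteDimensional ℂ (X ⧸ LinearMap.range (T : X →ₗ[ℂ] X))

/-- The Fredholm index `dim ker T − dim (X / Ran T)`. -/
def fredholmIndex {X : Type*} [NormedAddCommGroup X] [NormedSpace ℂ X] (T : X →L[ℂ] X) : ℤ :=
  (Module.finrank ℂ (LinearMap.ker (T : X →ₗ[ℂ] X)) : ℤ) - (Module.finrank ℂ (X ⧸ LinearMap.range (T : X →ₗ[ℂ] X)) : ℤ)

/-- The `n`-th approximation number `a_{n+1}(T) = inf {‖T − R‖ : rank R ≤ n}`. -/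
def approxNum {X : Type*} [NormedAddCommGroup X] [NormedSpace ℂ X]
    (T : X →L[ℂ] X) (n : ℕ) : ℝ :=
  sInf {c : ℝ | ∃ R : X →L[ℂ] X, FiniteDimensional ℂ (LinearMap.range (R : X →ₗ[ℂ] X)) ∧
    Module.finrank ℂ (LinearMap.range (R : X →ₗ[ℂ] X)) ≤ n ∧ c = ‖T - R‖}

/-- The ideal `S¹_app(X)` of operators with summable approximation numbers. -/
def MemS1app {X : Type*} [NormedAddCommGroup X] [NormedSpace ℂ X] (T : X →L[ℂ] X) : Prop :=
  Summable fun n => approxNum T n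

lemma Module.rank_le_natCast_iff {K V : Type*} [Field K] [AddCommGroup V] [Module K V] {n : ℕ} :
    Module.rank K V ≤ n ↔ FiniteDimensional K V ∧ Module.finrank K V ≤ n := by
  refine ⟨fun h ↦ ?_, fun ⟨_, h⟩ ↦ ?_⟩
  · have : FiniteDimensional K V :=
      Module.rank_lt_aleph0_iff.mp (h.trans_lt (Cardinal.natCast_lt_aleph0))
    exact ⟨this, Module.finrank_le_of_rank_le h⟩
  · rw [← Module.finrank_eq_rank]
    exact_mod_cast h

section ApproximationNumbers

variable {X : Type*} [NormedAddCommGroup X] [NormedSpace ℂ X]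

-- The cardinal `rank` is subadditive and submultiplicative with no finiteness side conditions,
-- unlike `finrank`, which is `0` on infinite-dimensional ranges.
lemma approxNum_eq_iInf (T : X →L[ℂ] X) (n : ℕ) :
    approxNum T n = ⨅ R : {R : X →L[ℂ] X // (R : X →ₗ[ℂ] X).rank ≤ n}, ‖T - R‖ := by
  rw [approxNum, iInf]
  congr 1
  ext c
  simp [LinearMap.rank, Module.rank_le_natCast_iff, eq_comm, and_assoc]

instance (n : ℕ) : Nonempty {R : X →L[ℂ] X // (R : X →ₗ[ℂ] X).rank ≤ n} :=
  ⟨⟨0, by simp⟩⟩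

lemma approxNum_le {T R : X →L[ℂ] X} {n : ℕ} (hR : (R : X →ₗ[ℂ] X).rank ≤ n) :
    approxNum T n ≤ ‖T - R‖ := by
  rw [approxNum_eq_iInf T n]
  exact ciInf_le ⟨0, Set.forall_mem_range.2 fun _ ↦ norm_nonneg _⟩
    (⟨R, hR⟩ : {R : X →L[ℂ] X // (R : X →ₗ[ℂ] X).rank ≤ n})

lemma approxNum_nonneg (T : X →L[ℂ] X) (n : ℕ) : 0 ≤ approxNum T n := by
  rw [approxNum_eq_iInf]
  exact Real.iInf_nonneg fun _ ↦ norm_nonneg _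

lemma approxNum_antitone (T : X →L[ℂ] X) : Antitone (approxNum T) := by
  intro m n hmn
  rw [approxNum_eq_iInf T m]
  exact le_ciInf fun R ↦ approxNum_le (R.2.trans (by exact_mod_cast hmn))

lemma approxNum_mul_left_le (B A : X →L[ℂ] X) (n : ℕ) :
    approxNum (B * A) n ≤ ‖B‖ * approxNum A n := by
  rw [approxNum_eq_iInf A, Real.mul_iInf_of_nonneg (norm_nonneg B)]
  refine le_ciInf fun R ↦ ?_
  calc approxNum (B * A) n ≤ ‖B * A - B * R‖ :=
        approxNum_le ((LinearMap.rank_comp_le_right _ _).trans R.2)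
    _ ≤ ‖B‖ * ‖A - R‖ := by rw [← mul_sub]; exact norm_mul_le _ _

lemma approxNum_mul_right_le (A B : X →L[ℂ] X) (n : ℕ) :
    approxNum (A * B) n ≤ ‖B‖ * approxNum A n := by
  rw [approxNum_eq_iInf A, Real.mul_iInf_of_nonneg (norm_nonneg B)]
  refine le_ciInf fun R ↦ ?_
  calc approxNum (A * B) n ≤ ‖A * B - R * B‖ :=
        approxNum_le ((LinearMap.rank_comp_le_left _ _).trans R.2)
    _ ≤ ‖B‖ * ‖A - R‖ := by rw [← sub_mul, mul_comm ‖B‖]; exact norm_mul_le _ _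

lemma approxNum_add_le (A B : X →L[ℂ] X) (m n : ℕ) :
    approxNum (A + B) (m + n) ≤ approxNum A m + approxNum B n := by
  rw [approxNum_eq_iInf A, approxNum_eq_iInf B]
  refine le_ciInf_add_ciInf fun R₁ R₂ ↦ ?_
  have hrank : ((R₁ + R₂ : X →L[ℂ] X) : X →ₗ[ℂ] X).rank ≤ ↑(m + n) := by
    push_cast
    exact (LinearMap.rank_add_le _ _).trans (add_le_add R₁.2 R₂.2)
  calc approxNum (A + B) (m + n) ≤ ‖A + B - (R₁ + R₂)‖ := approxNum_le hrank
    _ ≤ ‖A - R₁‖ + ‖B - R₂‖ := by rw [add_sub_add_comm]; exact norm_add_le _ _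

lemma approxNum_eq_zero {A : X →L[ℂ] X} {n : ℕ} (hA : (A : X →ₗ[ℂ] X).rank ≤ n) :
    approxNum A n = 0 :=
  le_antisymm ((approxNum_le hA).trans_eq (by simp)) (approxNum_nonneg A n)

lemma memS1app_of_finiteDimensional_range (A : X →L[ℂ] X)
    [FiniteDimensional ℂ (LinearMap.range (A : X →ₗ[ℂ] X))] : MemS1app A := by
  refine summable_of_ne_finset_zero
    (s := Finset.range (Module.finrank ℂ (LinearMap.range (A : X →ₗ[ℂ] X))))
    fun n hn ↦ approxNum_eq_zero ?_
  rw [LinearMap.rank, ← Module.finrank_eq_rank]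
  exact_mod_cast not_lt.mp (Finset.mem_range.not.mp hn)

lemma MemS1app.mul_left {A : X →L[ℂ] X} (B : X →L[ℂ] X) (hA : MemS1app A) : MemS1app (B * A) :=
  .of_nonneg_of_le (approxNum_nonneg _) (approxNum_mul_left_le B A) (Summable.mul_left ‖B‖ hA)

lemma MemS1app.mul_right {A : X →L[ℂ] X} (B : X →L[ℂ] X) (hA : MemS1app A) : MemS1app (A * B) :=
  .of_nonneg_of_le (approxNum_nonneg _) (approxNum_mul_right_le A B) (Summable.mul_left ‖B‖ hA)

lemma MemS1app.add {A B : X →L[ℂ] X} (hA : MemS1app A) (hB : MemS1app B) : MemS1app (A + B) := by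
  have hsum : Summable fun k ↦ approxNum A k + approxNum B k := Summable.add hA hB
  refine .even_add_odd (.of_nonneg_of_le (fun _ ↦ approxNum_nonneg _ _) (fun k ↦ ?_) hsum)
    (.of_nonneg_of_le (fun _ ↦ approxNum_nonneg _ _) (fun k ↦ ?_) hsum)
  · rw [two_mul]; exact approxNum_add_le A B k k
  · exact (approxNum_antitone _ (by omega : k + k ≤ 2 * k + 1)).trans (approxNum_add_le A B k k)

def S1app : TwoSidedIdeal (X →L[ℂ] X) :=
  .mk' {A | MemS1app A}
    (summable_zero.congr fun _ ↦ (approxNum_eq_zero (by simp)).symm)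
    .add (fun hA ↦ by simpa using hA.mul_left (-1)) (.mul_left _) (.mul_right _)

lemma mem_S1app {A : X →L[ℂ] X} : A ∈ S1app ↔ MemS1app A :=
  TwoSidedIdeal.mem_mk' ..

end ApproximationNumbers

section Parametrix

open Finset

variable {A : Type*} [Ring A]

lemma isIdempotentElem_one_sub_mul_of_mul_mul_eq {t s : A} (h : t * s * t = t) :
    IsIdempotentElem (1 - s * t) :=
  .one_sub (by rw [IsIdempotentElem, mul_assoc, ← mul_assoc t, h])

lemma isIdempotentElem_one_sub_mul_of_mul_mul_eq' {t s : A} (h : t * s * t = t) :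
    IsIdempotentElem (1 - t * s) :=
  .one_sub (by rw [IsIdempotentElem, ← mul_assoc, h])

def geomParametrix (t r : A) (n : ℕ) : A :=
  (∑ j ∈ range n, (1 - r * t) ^ j) * r

lemma geomParametrix_mul (t r : A) (n : ℕ) :
    geomParametrix t r n * t = 1 - (1 - r * t) ^ n := by
  rw [geomParametrix, mul_assoc]
  simpa only [sub_sub_cancel] using geom_sum_mul_neg (1 - r * t) n

lemma mul_geomParametrix (t r : A) (n : ℕ) :
    t * geomParametrix t r n = 1 - (1 - t * r) ^ n := by
  have hsemiconj : SemiconjBy t (1 - r * t) (1 - t * r) := by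
    simp only [SemiconjBy, mul_sub, sub_mul, mul_one, one_mul, mul_assoc]
  rw [geomParametrix, ← mul_assoc, mul_sum, sum_congr rfl fun j _ ↦ (hsemiconj.pow_right j).eq,
    ← sum_mul, mul_assoc]
  simpa only [sub_sub_cancel] using geom_sum_mul_neg (1 - t * r) n

theorem trace_sub_trace_eq_of_parametrices {M : Type*} [AddCommGroup M] (I : TwoSidedIdeal A)
    (tr : A → M) (htr_add : ∀ a b, a ∈ I → b ∈ I → tr (a + b) = tr a + tr b)
    (htr_comm : ∀ a b, a ∈ I → tr (a * b) = tr (b * a)) {t s₁ s₂ : A}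
    (h₁ : 1 - s₁ * t ∈ I) (h₁' : 1 - t * s₁ ∈ I) (h₂ : 1 - s₂ * t ∈ I) (h₂' : 1 - t * s₂ ∈ I) :
    tr (1 - s₁ * t) - tr (1 - t * s₁) = tr (1 - s₂ * t) - tr (1 - t * s₂) := by
  have htr_sub : ∀ a b, a ∈ I → b ∈ I → tr (a - b) = tr a - tr b := fun a b ha hb ↦ by
    rw [eq_sub_iff_add_eq, ← htr_add _ _ (sub_mem ha hb) hb, sub_add_cancel]
  have hdiff : s₁ - s₂ ∈ I := by
    rw [show s₁ - s₂ = s₁ * (1 - t * s₂) - (1 - s₁ * t) * s₂ by noncomm_ring]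
    exact sub_mem (I.mul_mem_left _ _ h₂') (I.mul_mem_right _ _ h₁)
  have hdt : (s₁ - s₂) * t = (1 - s₂ * t) - (1 - s₁ * t) := by noncomm_ring
  have htd : t * (s₁ - s₂) = (1 - t * s₂) - (1 - t * s₁) := by noncomm_ring
  have := htr_comm _ t hdiff
  rw [hdt, htd, htr_sub _ _ h₂ h₁, htr_sub _ _ h₂' h₁'] at this
  exact (sub_eq_sub_iff_sub_eq_sub.mp this).symm

end Parametrix

section InnerInverse

variable {R M : Type*} [Ring R] [AddCommGroup M] [Module R M] [TopologicalSpace M]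
  [IsTopologicalAddGroup M] {T S : M →L[R] M}

lemma range_one_sub_mul_eq_ker (h : T * S * T = T) :
    LinearMap.range ((1 - S * T : M →L[R] M) : M →ₗ[R] M) = LinearMap.ker (T : M →ₗ[R] M) := by
  apply le_antisymm
  · rintro _ ⟨x, rfl⟩
    simpa [sub_eq_zero] using congr($h x).symm
  · intro x hx
    exact ⟨x, by simp_all⟩

lemma isCompl_range_range_one_sub_mul (h : T * S * T = T) :
    IsCompl (LinearMap.range (T : M →ₗ[R] M))
      (LinearMap.range ((1 - T * S : M →L[R] M) : M →ₗ[R] M)) := by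
  have hQT : (1 - T * S) * T = 0 := by rw [sub_mul, h, one_mul, sub_self]
  constructor
  · rw [Submodule.disjoint_def]
    rintro _ ⟨x, rfl⟩ ⟨y, hy⟩
    change (1 - T * S) y = T x at hy
    calc T x = ((1 - T * S) * (1 - T * S)) y := by
          rw [(isIdempotentElem_one_sub_mul_of_mul_mul_eq' h).eq, hy]
      _ = ((1 - T * S) * T) x := congr((1 - T * S) $hy)
      _ = 0 := by rw [hQT]; rfl
  · rw [codisjoint_iff, eq_top_iff]
    intro x _
    exact Submodule.mem_sup.2 ⟨T (S x), ⟨S x, rfl⟩, (1 - T * S) x, ⟨x, rfl⟩, by simp⟩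

end InnerInverse

theorem IsFredholm.exists_mul_mul_eq_self {X : Type*} [NormedAddCommGroup X] [NormedSpace ℂ X]
    [CompleteSpace X] {T : X →L[ℂ] X} (hT : IsFredholm T) : ∃ S : X →L[ℂ] X, T * S * T = T := by
  obtain ⟨_, _⟩ := hT
  obtain ⟨C, hC_closed, hC⟩ := (Submodule.ClosedComplemented.of_finiteDimensional
    (LinearMap.ker (T : X →ₗ[ℂ] X))).exists_isClosed_isCompl
  obtain ⟨F, hF⟩ := Submodule.exists_isCompl (LinearMap.range (T : X →ₗ[ℂ] X))
  have : FiniteDimensional ℂ F := (Submodule.quotientEquivOfIsCompl _ _ hF).finiteDimensional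
  have : CompleteSpace C := hC_closed.completeSpace_coe
  let f := T.comp C.subtypeL
  have hrange : f.range = LinearMap.range (T : X →ₗ[ℂ] X) := by
    change LinearMap.range ((T : X →ₗ[ℂ] X) ∘ₗ C.subtype) = _
    rw [LinearMap.range_comp, Submodule.range_subtype, Submodule.map_eq_range_iff]
    exact hC.symm.codisjoint
  have hker : f.ker = ⊥ := by
    change LinearMap.ker ((T : X →ₗ[ℂ] X) ∘ₗ C.subtype) = ⊥
    rw [LinearMap.ker_comp, ← Submodule.disjoint_iff_comap_eq_bot]
    exact hC.symm.disjoint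
  let e := f.coprodSubtypeLEquivOfIsCompl (hrange ▸ hF) hker
  refine ⟨C.subtypeL ∘L ContinuousLinearMap.fst ℂ C F ∘L e.symm.toContinuousLinearMap, ?_⟩
  ext x
  obtain ⟨c, hc⟩ : T x ∈ f.range := hrange ▸ LinearMap.mem_range_self _ x
  have : e.symm (T x) = (c, 0) :=
    e.symm_apply_eq.2 (by simp [e, ContinuousLinearMap.coprodSubtypeLEquivOfIsCompl, ← hc])
  change T (e.symm (T x)).1 = T x
  rw [this]
  exact hc

theorem fredholmIndex_eq_trace_pow_sub_trace_pow_general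
    {X : Type*} [NormedAddCommGroup X] [NormedSpace ℂ X] [CompleteSpace X]
    (tr : (X →L[ℂ] X) → ℂ)
    (htr_add : ∀ A B : X →L[ℂ] X, MemS1app A → MemS1app B → tr (A + B) = tr A + tr B)
    (htr_rank : ∀ P : X →L[ℂ] X, P * P = P → FiniteDimensional ℂ (LinearMap.range (P : X →ₗ[ℂ] X)) →
      tr P = (Module.finrank ℂ (LinearMap.range (P : X →ₗ[ℂ] X)) : ℂ))
    (htr_comm : ∀ A B : X →L[ℂ] X, MemS1app A → tr (A * B) = tr (B * A))
    (T R : X →L[ℂ] X) (hT : IsFredholm T) (n : ℕ)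
    (h1 : MemS1app ((1 - T * R) ^ n)) (h2 : MemS1app ((1 - R * T) ^ n)) :
    (fredholmIndex T : ℂ) = tr ((1 - R * T) ^ n) - tr ((1 - T * R) ^ n) := by
  obtain ⟨S, hS⟩ := hT.exists_mul_mul_eq_self
  have : FiniteDimensional ℂ (X ⧸ LinearMap.range (T : X →ₗ[ℂ] X)) := hT.2
  let ecoker := Submodule.quotientEquivOfIsCompl _ _ (isCompl_range_range_one_sub_mul hS)
  have hP : FiniteDimensional ℂ (LinearMap.range ((1 - S * T : X →L[ℂ] X) : X →ₗ[ℂ] X)) := by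
    rw [range_one_sub_mul_eq_ker hS]; exact hT.1
  have hQ : FiniteDimensional ℂ (LinearMap.range ((1 - T * S : X →L[ℂ] X) : X →ₗ[ℂ] X)) :=
    ecoker.finiteDimensional
  have key := trace_sub_trace_eq_of_parametrices S1app tr (s₁ := S) (s₂ := geomParametrix T R n)
    (fun A B hA hB ↦ htr_add A B (mem_S1app.1 hA) (mem_S1app.1 hB))
    (fun A B hA ↦ htr_comm A B (mem_S1app.1 hA))
    (mem_S1app.2 (memS1app_of_finiteDimensional_range _))
    (mem_S1app.2 (memS1app_of_finiteDimensional_range _))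
    (by rw [geomParametrix_mul, sub_sub_cancel]; exact mem_S1app.2 h2)
    (by rw [mul_geomParametrix, sub_sub_cancel]; exact mem_S1app.2 h1)
  rw [geomParametrix_mul, mul_geomParametrix, sub_sub_cancel, sub_sub_cancel,
    htr_rank _ (isIdempotentElem_one_sub_mul_of_mul_mul_eq hS) hP,
    htr_rank _ (isIdempotentElem_one_sub_mul_of_mul_mul_eq' hS) hQ,
    range_one_sub_mul_eq_ker hS, ← ecoker.finrank_eq] at key
  rw [← key, fredholmIndex]
  push_cast
  rfl

/-- Higher power trace formula for the index: if `(Id − TR)^n` and `(Id − RT)^n`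
lie in `S¹_app(X)` for some `n ≥ 1`, then
`Index T = tr((Id − RT)^n) − tr((Id − TR)^n)`. -/
theorem fredholmIndex_eq_trace_pow_sub_trace_pow
    {X : Type*} [NormedAddCommGroup X] [NormedSpace ℂ X] [CompleteSpace X]
    (tr : (X →L[ℂ] X) → ℂ)
    (htr_add : ∀ A B : X →L[ℂ] X, MemS1app A → MemS1app B → tr (A + B) = tr A + tr B)
    (htr_smul : ∀ (c : ℂ) (A : X →L[ℂ] X), MemS1app A → tr (c • A) = c * tr A)
    (htr_rank : ∀ P : X →L[ℂ] X, P * P = P → FiniteDimensional ℂ (LinearMap.range (P : X →ₗ[ℂ] X)) →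
      tr P = (Module.finrank ℂ (LinearMap.range (P : X →ₗ[ℂ] X)) : ℂ))
    (htr_comm : ∀ A B : X →L[ℂ] X, MemS1app A → tr (A * B) = tr (B * A))
    (T R : X →L[ℂ] X) (hT : IsFredholm T) (n : ℕ) (hn : 1 ≤ n)
    (h1 : MemS1app ((1 - T * R) ^ n)) (h2 : MemS1app ((1 - R * T) ^ n)) :
    (fredholmIndex T : ℂ) = tr ((1 - R * T) ^ n) - tr ((1 - T * R) ^ n) :=
  fredholmIndex_eq_trace_pow_sub_trace_pow_general tr htr_add htr_rank htr_comm T R hT n h1 h2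
end
end

section
/- Let A be a unital algebra acting on a Banach space X via a representation π with π(1) = Id_X, and let F : X → X be a bounded operator such that F² − Id is compact and [F, π(a)] is compact for every a ∈ A (an odd Banach Fredholm module). Set P := (Id + F)/2. Then for every invertible element u of A, the operator P π(u) P − (Id − P) : X → X is Fredholm. -/
/-!
Compact operators form a two-sided ideal of `X →L[ℂ] X`. Modulo that ideal, `P` becomes an
idempotent `p` commuting with the image of `π u`, and in any ring `p u p - (1 - p)` is a unit
when `p` is an idempotent commuting with the unit `u`, with inverse `p u⁻¹ p - (1 - p)`. By
Atkinson's theorem an operator that is invertible modulo compact operators is Fredholm; the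
direction needed here reduces to the Riesz theory of operators of the form `1 + K` with `K`
compact.
-/

noncomputable section

open LinearMap

theorem IsIdempotentElem.isUnit_mul_mul_sub_one_sub {R : Type*} [Ring R] {p u : R}
    (hp : IsIdempotentElem p) (hpu : Commute p u) (hu : IsUnit u) :
    IsUnit (p * u * p - (1 - p)) := by
  have hpq : p * (1 - p) = 0 := by rw [mul_sub, mul_one, hp.eq, sub_self]
  have hqp : (1 - p) * p = 0 := by rw [sub_mul, one_mul, hp.eq, sub_self]
  have key : ∀ a b : R, Commute p b → a * b = 1 →
      (p * a * p - (1 - p)) * (p * b * p - (1 - p)) = 1 := by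
    intro a b hpb hab
    have hpbp : p * b * p = b * p := by rw [hpb.eq, mul_assoc, hp.eq]
    calc (p * a * p - (1 - p)) * (p * b * p - (1 - p))
        = p * a * (p * p * b * p) - p * a * (p * (1 - p)) - (1 - p) * p * (b * p)
            + (1 - p) * (1 - p) := by noncomm_ring
      _ = p * (a * b) * p + (1 - p) := by
          rw [hp.eq, hpbp, hpq, hqp, hp.one_sub.eq]; noncomm_ring
      _ = 1 := by rw [hab, mul_one, hp.eq, add_sub_cancel]
  obtain ⟨w, rfl⟩ := hu
  exact ⟨⟨_, p * ↑w⁻¹ * p - (1 - p), key _ _ hpu.units_inv_right w.mul_inv,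
    key _ _ hpu w.inv_mul⟩, rfl⟩

section Algebra

variable {𝕜 R : Type*} [Field 𝕜] [Ring R] [Algebra 𝕜 R]

theorem half_smul_one_add_mul_self_sub [CharZero 𝕜] (f : R) :
    (2⁻¹ : 𝕜) • (1 + f) * (2⁻¹ : 𝕜) • (1 + f) - (2⁻¹ : 𝕜) • (1 + f) = (4⁻¹ : 𝕜) • (f * f - 1) := by
  simp only [smul_mul_smul_comm, mul_add, add_mul, mul_one, one_mul, smul_sub, smul_add]
  module

theorem smul_one_add_mul_sub_mul_smul_one_add (c : 𝕜) (f t : R) :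
    c • (1 + f) * t - t * c • (1 + f) = c • (f * t - t * f) := by
  simp only [smul_mul_assoc, mul_smul_comm, mul_add, add_mul, mul_one, one_mul, smul_sub]
  module

end Algebra

section Calkin

variable (𝕜 X : Type*) [NontriviallyNormedField 𝕜] [NormedAddCommGroup X] [NormedSpace 𝕜 X]

def compactOperatorIdeal : TwoSidedIdeal (X →L[𝕜] X) :=
  .mk' {T | IsCompactOperator T} isCompactOperator_zero (fun hS hT ↦ hS.add hT)
    (fun hT ↦ hT.neg) (fun {S _} hT ↦ hT.clm_comp S) (fun {_ S} hT ↦ hT.comp_clm S)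

abbrev CalkinRing : Type _ := (compactOperatorIdeal 𝕜 X).ringCon.Quotient

def CalkinRing.mk : (X →L[𝕜] X) →+* CalkinRing 𝕜 X := (compactOperatorIdeal 𝕜 X).ringCon.mk'

variable {𝕜 X}

theorem CalkinRing.mk_eq_mk_iff {S T : X →L[𝕜] X} :
    CalkinRing.mk 𝕜 X S = CalkinRing.mk 𝕜 X T ↔ IsCompactOperator ⇑(S - T) :=
  RingCon.eq _ |>.trans <| (TwoSidedIdeal.rel_iff _ _ _).trans <| TwoSidedIdeal.mem_mk' _ _ _ _ _ _ _

end Calkin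

theorem finiteDimensional_ker_of_isCompactOperator_sub_one {𝕜 X : Type*}
    [NontriviallyNormedField 𝕜] [CompleteSpace 𝕜] [NormedAddCommGroup X] [NormedSpace 𝕜 X]
    {L : X →L[𝕜] X} (hL : IsCompactOperator ⇑(L - 1)) :
    FiniteDimensional 𝕜 (ker (L : X →ₗ[𝕜] X)) := by
  set N := ker (L : X →ₗ[𝕜] X)
  have hmaps : ∀ x ∈ N, ((L - 1 : X →L[𝕜] X) : X →ₗ[𝕜] X) x ∈ N := fun x hx ↦ by
    simp_all [N]
  have hid : (id : N → N) = -((L - 1 : X →L[𝕜] X) : X →ₗ[𝕜] X).restrict hmaps := by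
    funext x
    ext
    simp
  exact .of_isCompactOperator_id (hid ▸ (hL.restrict hmaps L.isClosed_ker).neg)

theorem surjective_of_injective_of_isCompactOperator_sub_one {𝕜 X : Type*}
    [NontriviallyNormedField 𝕜] [NormedAddCommGroup X] [NormedSpace 𝕜 X] [CompleteSpace X]
    {L : X →L[𝕜] X} (hL : IsCompactOperator ⇑(L - 1)) (hinj : Function.Injective L) :
    Function.Surjective L := by
  have hres := (hL.hasEigenvalue_or_mem_resolventSet (μ := -1) (by simp)).resolve_left ?_
  · have h1 : algebraMap 𝕜 (X →L[𝕜] X) (-1) - (L - 1) = -L := by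
      simp only [map_neg, map_one]; abel
    rw [spectrum.mem_resolventSet_iff, h1, IsUnit.neg_iff] at hres
    exact (ContinuousLinearMap.isUnit_iff_bijective.1 hres).2
  · refine fun h ↦ h ((Submodule.eq_bot_iff _).2 fun x hx ↦ hinj ?_)
    rw [Module.End.mem_eigenspace_iff] at hx
    simpa [sub_eq_iff_eq_add] using hx

/-- If the cokernel were infinite-dimensional, a finite-rank perturbation `g ∘ Q` (with `Q` a
projection onto `ker L`, and `g` injective modulo `range L`) would make `L` injective, hence
surjective by the Fredholm alternative, and this forces the cokernel to be a quotient of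
`ker L`. -/
theorem finiteDimensional_quotient_range_of_isCompactOperator_sub_one {𝕜 X : Type*} [RCLike 𝕜]
    [NormedAddCommGroup X] [NormedSpace 𝕜 X] [CompleteSpace X]
    {L : X →L[𝕜] X} (hL : IsCompactOperator ⇑(L - 1)) :
    FiniteDimensional 𝕜 (X ⧸ range (L : X →ₗ[𝕜] X)) := by
  set N := ker (L : X →ₗ[𝕜] X)
  set R := range (L : X →ₗ[𝕜] X)
  have := finiteDimensional_ker_of_isCompactOperator_sub_one hL
  by_contra hR
  obtain ⟨h, hinj⟩ : ∃ h : N →ₗ[𝕜] X ⧸ R, Function.Injective h :=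
    Module.Free.exists_linearMap_injective_of_rank_lt <|
      (Module.rank_lt_aleph0_iff.2 inferInstance).trans_le
        (not_lt.1 (mt Module.rank_lt_aleph0_iff.1 hR))
  obtain ⟨s, hs⟩ := R.mkQ.exists_rightInverse_of_surjective R.range_mkQ
  obtain ⟨Q, hQ⟩ := Submodule.ClosedComplemented.of_finiteDimensional N
  let g : N →L[𝕜] X := LinearMap.toContinuousLinearMap (s ∘ₗ h)
  have hg : ∀ y, R.mkQ (g y) = h y := fun y ↦ congr($hs (h y))
  have hF : IsCompactOperator (g ∘L Q) :=
    (isCompactOperator_of_locallyCompactSpace_dom Q).clm_comp g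
  have hinj' : Function.Injective (L + g ∘L Q) := by
    refine (injective_iff_map_eq_zero _).2 fun x hx ↦ ?_
    have hgQx : g (Q x) = -L x := eq_neg_of_add_eq_zero_right hx
    have hQx : Q x = 0 := hinj <| by simp [← hg, hgQx, R]
    have hLx : L x = 0 := by simpa [hQx] using hx
    simpa [hQx] using (congr(($(hQ ⟨x, hLx⟩) : X))).symm
  have hsurj := surjective_of_injective_of_isCompactOperator_sub_one
    (by rw [add_sub_right_comm]; exact hL.add hF) hinj'
  refine hR (Module.Finite.of_surjective h fun ξ ↦ ?_)
  obtain ⟨y, rfl⟩ := R.mkQ_surjective ξ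
  obtain ⟨x, rfl⟩ := hsurj y
  exact ⟨Q x, by simp [← hg, R]⟩

theorem IsFredholm.of_isUnit_calkinRingMk {X : Type*} [NormedAddCommGroup X] [NormedSpace ℂ X]
    [CompleteSpace X] {T : X →L[ℂ] X} (hT : IsUnit (CalkinRing.mk ℂ X T)) : IsFredholm T := by
  obtain ⟨w, hw⟩ := hT
  obtain ⟨S, hS⟩ : ∃ S, CalkinRing.mk ℂ X S = ↑w⁻¹ := RingCon.mk'_surjective _ _
  have hST : IsCompactOperator ⇑(S * T - 1) := CalkinRing.mk_eq_mk_iff.1 <| by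
    rw [map_mul, map_one, hS, ← hw, Units.inv_mul]
  have hTS : IsCompactOperator ⇑(T * S - 1) := CalkinRing.mk_eq_mk_iff.1 <| by
    rw [map_mul, map_one, hS, ← hw, Units.mul_inv]
  constructor
  · have := finiteDimensional_ker_of_isCompactOperator_sub_one hST
    refine Submodule.finiteDimensional_of_le (S₂ := ker ((S * T : X →L[ℂ] X) : X →ₗ[ℂ] X)) ?_
    exact fun x (hx : T x = 0) ↦ show S (T x) = 0 by rw [hx, map_zero]
  · have := finiteDimensional_quotient_range_of_isCompactOperator_sub_one hTS
    have hle : range ((T * S : X →L[ℂ] X) : X →ₗ[ℂ] X) ≤ range (T : X →ₗ[ℂ] X) := by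
      rintro _ ⟨x, rfl⟩
      exact ⟨S x, rfl⟩
    exact Module.Finite.of_surjective (Submodule.factor hle) (Submodule.factor_surjective hle)

/-- Odd coupling: for an odd Banach Fredholm module `(X, F)` over a unital algebra `A`
(so `F² − Id` and all commutators `[F, π(a)]` are compact) with `P = (Id + F)/2`,
and `u ∈ A` invertible, the operator `P π(u) P − (Id − P)` is Fredholm. -/
theorem isFredholm_PuP_sub
    {A : Type*} [Ring A] {X : Type*} [NormedAddCommGroup X] [NormedSpace ℂ X] [CompleteSpace X]
    (π : A →+* (X →L[ℂ] X)) (F : X →L[ℂ] X)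
    (hF : IsCompactOperator ⇑(F * F - 1))
    (hcomm : ∀ a : A, IsCompactOperator ⇑(F * π a - π a * F))
    (u : A) (hu : IsUnit u)
    (P : X →L[ℂ] X) (hP : P = (2⁻¹ : ℂ) • (1 + F)) :
    IsFredholm (P * π u * P - (1 - P)) := by
  set q := CalkinRing.mk ℂ X
  have hidem : IsIdempotentElem (q P) := by
    rw [IsIdempotentElem, ← map_mul, CalkinRing.mk_eq_mk_iff, hP, half_smul_one_add_mul_self_sub]
    exact hF.smul _
  have hPu : Commute (q P) (q (π u)) := by
    rw [Commute, SemiconjBy, ← map_mul, ← map_mul, CalkinRing.mk_eq_mk_iff, hP,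
      smul_one_add_mul_sub_mul_smul_one_add]
    exact (hcomm u).smul _
  refine IsFredholm.of_isUnit_calkinRingMk ?_
  simpa only [map_sub, map_mul, map_one] using
    hidem.isUnit_mul_mul_sub_one_sub hPu (hu.map (q.comp π))
end
end
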